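/- Let A be a finite nonempty set and 𝒜 any set. Let fSets_A be the category whose objects are pairs (I, α) of a finite nonempty set I with a map α : A → I, and whose morphisms (I₁, α₁) → (I₂, α₂) are surjections φ : I₁ → I₂ with φ ∘ α₁ = α₂. Consider the functor κ : (fSets_A)^op → Set sending (I, α) to the set Map(I, 𝒜) of all functions I → 𝒜, with transition maps given by precomposition. Then colim_{(fSets_A)^op} κ is in natural bijection with the set of pairs (ℐ, β), where ℐ ⊆ 𝒜 is a finite nonempty subset and β : A → ℐ is a map; the bijection sends the class of f : I → 𝒜 to (f(I), f ∘ α). -/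

import Mathlib

/-! The pair `(ℐ, β)` is represented by the inclusion `ℐ ↪ 𝒜` over the marked set `(ℐ, β)`,
and any `f : I → 𝒜` is the pullback of the representative of `(f(I), f ∘ α)` along the
surjection `I ↠ f(I)`. So every class of the colimit contains exactly one such canonical
representative, and the cocone `f ↦ (f(I), f ∘ α)` is universal. -/

open CategoryTheory Function Limits

/-- An object of `fSets_A`: a finite nonempty set `I` with a marking `α : A → I`. -/
structure MarkedSet (A : Type) : Type 1 where
  I : Type
  iFin : Finite I
  iNe : Nonempty I
  mark : A → I

structure MarkedHom {A : Type} (X Y : MarkedSet A) : Type where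
  τ : X.I → Y.I
  hτ : Function.Surjective τ
  hm : ∀ a, τ (X.mark a) = Y.mark a

theorem MarkedHom.ext' {A : Type} {X Y : MarkedSet A} :
    ∀ {f g : MarkedHom X Y}, f.τ = g.τ → f = g
  | ⟨_, _, _⟩, ⟨_, _, _⟩, rfl => rfl

instance {A : Type} : Category (MarkedSet A) where
  Hom := MarkedHom
  id X := ⟨_root_.id, Function.surjective_id, fun _ => rfl⟩
  comp := fun f g => ⟨g.τ ∘ f.τ, g.hτ.comp f.hτ,
    fun a => by simp only [Function.comp_apply, f.hm, g.hm]⟩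
  id_comp := fun f => MarkedHom.ext' rfl
  comp_id := fun f => MarkedHom.ext' rfl
  assoc := fun f g h => MarkedHom.ext' rfl

/-- The functor `κ : (fSets_A)^op → Set`, `(I, α) ↦ Map(I, 𝒜)`, with transitions given
by precomposition. -/
def kappa (A 𝒜 : Type) : (MarkedSet A)ᵒᵖ ⥤ Type where
  obj X := X.unop.I → 𝒜
  map h := TypeCat.ofHom fun f => f ∘ h.unop.τ
  map_id _ := rfl
  map_comp _ _ := rfl

/-- The set of pairs `(ℐ, β)` of a finite nonempty subset `ℐ ⊆ 𝒜` with a marking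
`β : A → ℐ` (encoded as a function `A → 𝒜` with values in `ℐ`). -/
def RanPt (A 𝒜 : Type) : Type :=
  {p : Set 𝒜 × (A → 𝒜) // p.1.Finite ∧ p.1.Nonempty ∧ ∀ a, p.2 a ∈ p.1}

/-- The cocone over `κ` with apex `RanPt`, whose components send `f : I → 𝒜` to the
pair `(f(I), f ∘ α)`. -/
def iotaCocone (A 𝒜 : Type) : Limits.Cocone (kappa A 𝒜) where
  pt := RanPt A 𝒜
  ι :=
    { app := fun X => TypeCat.ofHom fun f => ⟨(Set.range f, fun a => f (X.unop.mark a)),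
        (by have := X.unop.iFin; exact Set.finite_range f),
        (by have := X.unop.iNe; exact Set.range_nonempty f),
        fun a => Set.mem_range_self _⟩
      naturality := by
        intro X Y h
        ext f
        refine Subtype.ext (Prod.ext ?_ ?_)
        · exact h.unop.hτ.range_comp f
        · funext a
          exact congrArg f (h.unop.hm a) }

def RanPt.obj {A 𝒜 : Type} (p : RanPt A 𝒜) : MarkedSet A :=
  ⟨p.1.1, p.2.1.to_subtype, p.2.2.1.to_subtype, fun a => ⟨p.1.2 a, p.2.2.2 a⟩⟩

namespace CategoryTheory.Limits.Types

/-- Every element `y` is a transition image of the representative of `c.ι y`, so a cocone map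
out of `c` is determined by its values on representatives. -/
def isColimitOfRepresentatives {J : Type*} [Category J] {F : J ⥤ Type*} (c : Cocone F)
    (j : c.pt → J) (x : ∀ p, F.obj (j p)) (hx : ∀ p, c.ι.app (j p) (x p) = p)
    (htrans : ∀ i (y : F.obj i), ∃ φ : j (c.ι.app i y) ⟶ i, F.map φ (x _) = y) :
    IsColimit c where
  desc s := TypeCat.ofHom fun p => s.ι.app (j p) (x p)
  fac s i := by
    ext y
    obtain ⟨φ, hφ⟩ := htrans i y
    exact (Cocone.w_apply s φ _).symm.trans (congrArg (s.ι.app i) hφ)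
  uniq s m hm := by
    ext p
    change m p = s.ι.app (j p) (x p)
    rw [← hm, types_comp_apply, hx]

end CategoryTheory.Limits.Types

theorem iotaCocone_ι_app_val {A 𝒜 : Type} (p : RanPt A 𝒜) :
    (iotaCocone A 𝒜).ι.app (Opposite.op p.obj) Subtype.val = p :=
  Subtype.ext (Prod.ext Subtype.range_val rfl)

/-- The corestriction of `f` to its image, as a morphism of marked sets. -/
def MarkedSet.rangeHom {A 𝒜 : Type} (X : MarkedSet A) (f : X.I → 𝒜) :
    X ⟶ ((iotaCocone A 𝒜).ι.app (Opposite.op X) f).obj :=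
  ⟨Set.rangeFactorization f, Set.rangeFactorization_surjective, fun _ => rfl⟩

theorem stmt12 (A 𝒜 : Type) :
    Nonempty (Limits.IsColimit (iotaCocone A 𝒜)) :=
  ⟨Types.isColimitOfRepresentatives _ (fun p => Opposite.op p.obj) (fun _ => Subtype.val)
    iotaCocone_ι_app_val fun X f => ⟨(X.unop.rangeHom f).op, rfl⟩⟩
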